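/- Let k ≥ 1 and let z : [a,c] → ℝ be continuous. Then there exists a unique polynomial p of degree at most k such that ∫_a^c p(x)·q(x) dx = ∫_a^c z(x)·q(x) dx for all polynomials q of degree at most k−1, and p(c) = z(c). -/

import Mathlib

open Polynomial MeasureTheory intervalIntegral Set

/-- A polynomial times a power is interval integrable. -/
private lemma polyInt (p : Polynomial ℝ) (i : ℕ) (a c : ℝ) :
    IntervalIntegrable (fun x => p.eval x * x ^ i) volume a c :=
  ((p.continuous).mul (continuous_pow i)).intervalIntegrable a c

private lemma zInt {z : ℝ → ℝ} {a c : ℝ} (hac : a ≤ c)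
    (hz : ContinuousOn z (Set.Icc a c)) (i : ℕ) :
    IntervalIntegrable (fun x => z x * x ^ i) volume a c := by
  apply ContinuousOn.intervalIntegrable
  rw [Set.uIcc_of_le hac]
  exact hz.mul (continuous_pow i).continuousOn

/-- Expansion of `∫ p * q` over monomial integrals. -/
private lemma integral_mul_poly (g : ℝ → ℝ) (q : Polynomial ℝ) (k : ℕ)
    (hq : q.natDegree < k) (a c : ℝ)
    (hint : ∀ i : ℕ, IntervalIntegrable (fun x => g x * x ^ i) volume a c) :
    (∫ x in a..c, g x * q.eval x)
      = ∑ i ∈ Finset.range k, q.coeff i * ∫ x in a..c, g x * x ^ i := by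
  have hev : ∀ x : ℝ, g x * q.eval x
      = ∑ i ∈ Finset.range k, q.coeff i * (g x * x ^ i) := by
    intro x
    rw [Polynomial.eval_eq_sum_range' hq, Finset.mul_sum]
    apply Finset.sum_congr rfl
    intro i _; ring
  calc (∫ x in a..c, g x * q.eval x)
      = ∫ x in a..c, ∑ i ∈ Finset.range k, q.coeff i * (g x * x ^ i) := by
        simp_rw [hev]
    _ = ∑ i ∈ Finset.range k, ∫ x in a..c, q.coeff i * (g x * x ^ i) := by
        apply intervalIntegral.integral_finset_sum
        intro i _
        exact (hint i).const_mul _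
    _ = ∑ i ∈ Finset.range k, q.coeff i * ∫ x in a..c, g x * x ^ i := by
        apply Finset.sum_congr rfl
        intro i _
        exact intervalIntegral.integral_const_mul _ _

/-- Injectivity core: a polynomial of degree ≤ k orthogonal to all monomials of
degree < k that vanishes at c must be zero. -/
private lemma gr_inj (k : ℕ) (a c : ℝ) (hac : a < c) (p : Polynomial ℝ)
    (hdeg : p.natDegree ≤ k)
    (horth : ∀ i, i < k → (∫ x in a..c, p.eval x * x ^ i) = 0)
    (hc : p.eval c = 0) : p = 0 := by
  by_contra hp
  obtain ⟨r, hr⟩ := Polynomial.dvd_iff_isRoot.mpr hc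
  have hr0 : r ≠ 0 := by
    rintro rfl; rw [mul_zero] at hr; exact hp hr
  have hrdeg : r.natDegree < k := by
    have h1 := congrArg Polynomial.natDegree hr
    rw [Polynomial.natDegree_mul (Polynomial.X_sub_C_ne_zero c) hr0,
      Polynomial.natDegree_X_sub_C] at h1
    omega
  -- ∫ p * r = 0
  have horth' : (∫ x in a..c, p.eval x * r.eval x) = 0 := by
    rw [integral_mul_poly (fun x => p.eval x) r k hrdeg a c (fun i => polyInt p i a c)]
    apply Finset.sum_eq_zero
    intro i hi
    rw [horth i (Finset.mem_range.mp hi), mul_zero]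
  -- rewrite as - ∫ (c - x) * r x ^ 2
  have hEq : ∀ x : ℝ, p.eval x * r.eval x = -((c - x) * r.eval x ^ 2) := by
    intro x
    rw [hr]
    simp only [Polynomial.eval_mul, Polynomial.eval_sub, Polynomial.eval_X,
      Polynomial.eval_C]
    ring
  set f : ℝ → ℝ := fun x => (c - x) * r.eval x ^ 2 with hf
  have hfc : Continuous f := by
    apply Continuous.mul
    · exact continuous_const.sub continuous_id
    · exact (r.continuous).pow 2
  have hfi : IntervalIntegrable f volume a c := hfc.intervalIntegrable a c
  have hfint : (∫ x in a..c, f x) = 0 := by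
    have : (∫ x in a..c, p.eval x * r.eval x) = ∫ x in a..c, -f x := by
      apply intervalIntegral.integral_congr
      intro x _; exact hEq x
    rw [this, intervalIntegral.integral_neg] at horth'
    linarith
  -- but the integral is positive
  have h₀ : 0 ≤ᵐ[volume.restrict (Set.uIoc a c)] f := by
    rw [Set.uIoc_of_le hac.le]
    filter_upwards [MeasureTheory.ae_restrict_mem measurableSet_Ioc] with x hx
    exact mul_nonneg (by linarith [hx.2]) (sq_nonneg _)
  have hpos : 0 < ∫ x in a..c, f x := by
    rw [intervalIntegral.integral_pos_iff_support_of_nonneg_ae' h₀ hfi]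
    refine ⟨hac, ?_⟩
    have hsub : Set.Ioo a c \ {x | Polynomial.IsRoot r x}
        ⊆ Function.support f ∩ Set.Ioc a c := by
      rintro x ⟨hx, hnr⟩
      constructor
      · apply mul_ne_zero
        · have := hx.2; intro h; linarith [sub_eq_zero.mp h]
        · exact pow_ne_zero 2 hnr
      · exact Set.Ioo_subset_Ioc_self hx
    calc (0 : ENNReal) < volume (Set.Ioo a c) := by
          rw [Real.volume_Ioo]
          exact ENNReal.ofReal_pos.mpr (by linarith)
      _ = volume (Set.Ioo a c \ {x | Polynomial.IsRoot r x}) := by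
          rw [measure_diff_null
            ((Polynomial.finite_setOf_isRoot hr0).measure_zero volume)]
      _ ≤ volume (Function.support f ∩ Set.Ioc a c) := measure_mono hsub
  rw [hfint] at hpos
  exact lt_irrefl 0 hpos

/-- Well-posedness of the one-dimensional Gauss–Radau projector: for
continuous `z` on `[a,c]` and `k ≥ 1` there is a unique polynomial `p` of
degree at most `k` that is `L²(a,c)`-orthogonal to all polynomials of degree
at most `k-1` relative to `z` and matches `z` at the right endpoint `c`. -/
theorem gauss_radau_projector_wellposed (k : ℕ) (hk : 1 ≤ k) (a c : ℝ)
    (hac : a < c) (z : ℝ → ℝ) (hz : ContinuousOn z (Set.Icc a c)) :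
    ∃! p : Polynomial ℝ, p.natDegree ≤ k ∧
      (∀ q : Polynomial ℝ, q.natDegree ≤ k - 1 →
        (∫ x in a..c, p.eval x * q.eval x) = ∫ x in a..c, z x * q.eval x) ∧
      p.eval c = z c := by
  -- the linear map
  set V := Polynomial.degreeLT ℝ (k + 1) with hV
  have hmemdeg : ∀ p : Polynomial ℝ, p ∈ V ↔ p.natDegree ≤ k := by
    intro p
    rw [hV, Polynomial.mem_degreeLT]
    constructor
    · intro h
      by_cases hp : p = 0
      · simp [hp]
      · rw [← Polynomial.natDegree_lt_iff_degree_lt hp, Nat.lt_succ_iff] at h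
        exact h
    · intro h
      calc p.degree ≤ (p.natDegree : WithBot ℕ) := Polynomial.degree_le_natDegree
        _ < ((k + 1 : ℕ) : WithBot ℕ) := by
            exact_mod_cast Nat.lt_succ_of_le h
  let L : V →ₗ[ℝ] (Fin k → ℝ) × ℝ :=
    { toFun := fun p =>
        (fun i => ∫ x in a..c, (p : Polynomial ℝ).eval x * x ^ (i : ℕ),
          (p : Polynomial ℝ).eval c)
      map_add' := by
        intro p q
        refine Prod.ext ?_ ?_
        · funext i
          simp only [Submodule.coe_add, Polynomial.eval_add, add_mul]
          exact intervalIntegral.integral_add (polyInt _ _ a c) (polyInt _ _ a c)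
        · simp [Polynomial.eval_add]
      map_smul' := by
        intro m p
        refine Prod.ext ?_ ?_
        · funext i
          simp only [Submodule.coe_smul, Polynomial.eval_smul, smul_eq_mul, mul_assoc,
            RingHom.id_apply, Prod.smul_fst, Pi.smul_apply]
          exact intervalIntegral.integral_const_mul m _
        · simp [Polynomial.eval_smul] }
  have hinj : Function.Injective L := by
    rw [← LinearMap.ker_eq_bot, LinearMap.ker_eq_bot']
    intro p hp
    have h1 : ∀ i : Fin k, (∫ x in a..c, (p : Polynomial ℝ).eval x * x ^ (i : ℕ)) = 0 := by
      intro i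
      exact congrFun (congrArg Prod.fst hp) i
    have h2 : (p : Polynomial ℝ).eval c = 0 := congrArg Prod.snd hp
    have := gr_inj k a c hac (p : Polynomial ℝ) ((hmemdeg _).mp p.2)
      (fun i hi => h1 ⟨i, hi⟩) h2
    exact Subtype.ext this
  haveI : FiniteDimensional ℝ V := (Polynomial.degreeLTEquiv ℝ (k + 1)).symm.finiteDimensional
  have hsurj : Function.Surjective L := by
    have hfr : Module.finrank ℝ V = Module.finrank ℝ ((Fin k → ℝ) × ℝ) := by
      rw [(Polynomial.degreeLTEquiv ℝ (k + 1)).finrank_eq]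
      simp [Module.finrank_prod, Module.finrank_pi]
    exact (LinearMap.injective_iff_surjective_of_finrank_eq_finrank hfr).mp hinj
  obtain ⟨p, hp⟩ := hsurj
    (fun i : Fin k => ∫ x in a..c, z x * x ^ (i : ℕ), z c)
  have hp1 : ∀ i : Fin k, (∫ x in a..c, (p : Polynomial ℝ).eval x * x ^ (i : ℕ))
      = ∫ x in a..c, z x * x ^ (i : ℕ) := by
    intro i; exact congrFun (congrArg Prod.fst hp) i
  have hp2 : (p : Polynomial ℝ).eval c = z c := congrArg Prod.snd hp
  -- key: matching monomial integrals gives matching integrals against all low-degree q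
  have key : ∀ p' : Polynomial ℝ,
      (∀ i : ℕ, i < k → (∫ x in a..c, p'.eval x * x ^ i) = ∫ x in a..c, z x * x ^ i) →
      ∀ q : Polynomial ℝ, q.natDegree ≤ k - 1 →
        (∫ x in a..c, p'.eval x * q.eval x) = ∫ x in a..c, z x * q.eval x := by
    intro p' hmono q hq
    have hqlt : q.natDegree < k := by omega
    rw [integral_mul_poly (fun x => p'.eval x) q k hqlt a c (fun i => polyInt p' i a c),
      integral_mul_poly z q k hqlt a c (fun i => zInt hac.le hz i)]
    apply Finset.sum_congr rfl
    intro i hi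
    rw [hmono i (Finset.mem_range.mp hi)]
  refine ⟨(p : Polynomial ℝ), ⟨(hmemdeg _).mp p.2, ?_, hp2⟩, ?_⟩
  · exact key _ (fun i hi => hp1 ⟨i, hi⟩)
  · -- uniqueness
    rintro p' ⟨hd', horth', hc'⟩
    have hmem' : p' ∈ V := (hmemdeg _).mpr hd'
    have hLp' : L ⟨p', hmem'⟩ =
        (fun i : Fin k => ∫ x in a..c, z x * x ^ (i : ℕ), z c) := by
      refine Prod.ext ?_ ?_
      · funext i
        have hXi : ((X : Polynomial ℝ) ^ (i : ℕ)).natDegree ≤ k - 1 := by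
          rw [Polynomial.natDegree_X_pow]
          omega
        have := horth' ((X : Polynomial ℝ) ^ (i : ℕ)) hXi
        simp at this; exact this
      · exact hc'
    have : (⟨p', hmem'⟩ : V) = p := hinj (hLp'.trans hp.symm)
    exact congrArg Subtype.val this
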